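/- Let U ⊆ ℝ × ℝ be open and convex. Let Q₁, ν₁, u₁ : U → E be smooth with ‖u₁ k‖ = 1, ‖ν₁ k‖ = 1 and ⟪ν₁ k, Dᵢ Q₁ k⟫ = 0 for all k ∈ U and i = 1, 2, and define the once-reflected directions u₂ k = u₁ k − 2 ⟪u₁ k, ν₁ k⟫ • ν₁ k. Let s : U → ℝ be smooth, set Q₂ k = Q₁ k + s k • u₂ k, let ν₂ : U → E be smooth with ‖ν₂ k‖ = 1 and ⟪ν₂ k, Dᵢ Q₂ k⟫ = 0 for all k ∈ U and i = 1, 2, and define the twice-reflected directions u₃ k = u₂ k − 2 ⟪u₂ k, ν₂ k⟫ • ν₂ k. If the incident family (Q₁, u₁) is normal, then the family (Q₂, u₃) obtained after the two successive reflections is normal. (Malus' theorem for two successive reflections on smooth mirrors.) -/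

import Mathlib

/-! For a unit field `u` we have `⟪u, Du⟫ = 0`, so the surface `P + λ • u` is orthogonal to the
rays exactly when `⟪u, DP⟫ = -Dλ`. A reflection at a mirror through `P` changes `u` only along the
mirror normal, which is orthogonal to `DP`; hence it does not change `⟪u, DP⟫`, and the reflected
family is normal with the same `λ`. Moving the base points along the rays, `P ↦ P + s • u`, leaves
the surfaces unchanged once `λ` is replaced by `λ - s`. Applying this reflect–move–reflect gives
the two-mirror statement. -/

open RealInnerProductSpace

noncomputable section

/-- The Euclidean affine space in which light propagates. -/
abbrev E : Type := EuclideanSpace ℝ (Fin 3)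

/-- Partial derivative in the first coordinate direction of `ℝ × ℝ`. -/
def D1 {F : Type*} [NormedAddCommGroup F] [NormedSpace ℝ F] (f : ℝ × ℝ → F) (k : ℝ × ℝ) : F :=
  fderiv ℝ f k (1, 0)

/-- Partial derivative in the second coordinate direction of `ℝ × ℝ`. -/
def D2 {F : Type*} [NormedAddCommGroup F] [NormedSpace ℝ F] (f : ℝ × ℝ → F) (k : ℝ × ℝ) : F :=
  fderiv ℝ f k (0, 1)

/-- A rank-2 family of oriented lines `(P, u)` is *normal* if there is a smooth
function `lam` such that the surface `k ↦ P k + lam k • u k` is orthogonal to all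
the lines of the family. -/
def IsNormal (U : Set (ℝ × ℝ)) (P u : ℝ × ℝ → E) : Prop :=
  ∃ lam : ℝ × ℝ → ℝ, ContDiffOn ℝ (⊤ : ℕ∞) lam U ∧
    ∀ k ∈ U, ⟪u k, D1 (fun k => P k + lam k • u k) k⟫ = 0 ∧
             ⟪u k, D2 (fun k => P k + lam k • u k) k⟫ = 0

open Filter Topology

section

variable {F V : Type*} [NormedAddCommGroup F] [NormedSpace ℝ F]
  [NormedAddCommGroup V] [InnerProductSpace ℝ V]

def mirrorReflect (ν u : V) : V := u - (2 * ⟪u, ν⟫) • ν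

theorem norm_mirrorReflect {ν : V} (hν : ‖ν‖ = 1) (u : V) : ‖mirrorReflect ν u‖ = ‖u‖ := by
  have hsq : ‖mirrorReflect ν u‖ ^ 2 = ‖u‖ ^ 2 := by
    rw [mirrorReflect, norm_sub_sq_real, norm_smul, real_inner_smul_right, hν,
      Real.norm_eq_abs, mul_pow, sq_abs]
    ring
  exact (sq_eq_sq₀ (norm_nonneg _) (norm_nonneg _)).1 hsq

theorem inner_mirrorReflect_of_inner_eq_zero {ν w : V} (h : ⟪ν, w⟫ = 0) (u : V) :
    ⟪mirrorReflect ν u, w⟫ = ⟪u, w⟫ := by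
  rw [mirrorReflect, inner_sub_left, real_inner_smul_left, h, mul_zero, sub_zero]

theorem DifferentiableAt.mirrorReflect {ν u : F → V} {k : F} (hν : DifferentiableAt ℝ ν k)
    (hu : DifferentiableAt ℝ u k) :
    DifferentiableAt ℝ (fun x => mirrorReflect (ν x) (u x)) k :=
  hu.sub (((hu.inner ℝ hν).const_mul 2).smul hν)

theorem DifferentiableOn.mirrorReflect {ν u : F → V} {U : Set F} (hν : DifferentiableOn ℝ ν U)
    (hu : DifferentiableOn ℝ u U) :
    DifferentiableOn ℝ (fun x => mirrorReflect (ν x) (u x)) U :=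
  hu.sub (((hu.inner ℝ hν).const_mul 2).smul hν)

theorem inner_fderiv_eq_zero_of_norm_eq_one {u : F → V} {k : F} (hu : DifferentiableAt ℝ u k)
    (hunit : ∀ᶠ x in 𝓝 k, ‖u x‖ = 1) (v : F) : ⟪u k, fderiv ℝ u k v⟫ = 0 := by
  have hconst : (fun x => ⟪u x, u x⟫) =ᶠ[𝓝 k] fun _ => (1 : ℝ) := by
    filter_upwards [hunit] with x hx
    rw [real_inner_self_eq_norm_sq, hx, one_pow]
  have hderiv : fderiv ℝ (fun x => ⟪u x, u x⟫) k v = 0 := by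
    rw [hconst.fderiv_eq, fderiv_fun_const, Pi.zero_apply, zero_apply]
  rw [fderiv_inner_apply ℝ hu hu, real_inner_comm (u k)] at hderiv
  linarith

theorem inner_fderiv_add_smul_of_norm_eq_one {P u : F → V} {lam : F → ℝ} {k : F}
    (hP : DifferentiableAt ℝ P k) (hlam : DifferentiableAt ℝ lam k)
    (hu : DifferentiableAt ℝ u k) (hunit : ∀ᶠ x in 𝓝 k, ‖u x‖ = 1) (v : F) :
    ⟪u k, fderiv ℝ (fun x => P x + lam x • u x) k v⟫
      = ⟪u k, fderiv ℝ P k v⟫ + fderiv ℝ lam k v := by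
  have hu_norm : ⟪u k, u k⟫ = 1 := inner_self_eq_one_of_norm_eq_one hunit.self_of_nhds
  rw [fderiv_fun_add (g := fun x => lam x • u x) hP (hlam.smul hu), fderiv_fun_smul hlam hu]
  simp only [add_apply, smul_apply,
    ContinuousLinearMap.smulRight_apply, inner_add_right, real_inner_smul_right, hu_norm,
    inner_fderiv_eq_zero_of_norm_eq_one hu hunit v]
  ring

theorem inner_fderiv_add_smul_mirrorReflect {P ν u : F → V} {lam : F → ℝ} {k : F}
    (hP : DifferentiableAt ℝ P k) (hlam : DifferentiableAt ℝ lam k)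
    (hν : DifferentiableAt ℝ ν k) (hu : DifferentiableAt ℝ u k)
    (hν_unit : ∀ᶠ x in 𝓝 k, ‖ν x‖ = 1) (hu_unit : ∀ᶠ x in 𝓝 k, ‖u x‖ = 1) {v : F}
    (horth : ⟪ν k, fderiv ℝ P k v⟫ = 0) :
    ⟪mirrorReflect (ν k) (u k), fderiv ℝ (fun x => P x + lam x • mirrorReflect (ν x) (u x)) k v⟫
      = ⟪u k, fderiv ℝ (fun x => P x + lam x • u x) k v⟫ := by
  have hu'_unit : ∀ᶠ x in 𝓝 k, ‖mirrorReflect (ν x) (u x)‖ = 1 := by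
    filter_upwards [hν_unit, hu_unit] with x hνx hux
    rw [norm_mirrorReflect hνx, hux]
  rw [inner_fderiv_add_smul_of_norm_eq_one hP hlam (hν.mirrorReflect hu) hu'_unit,
    inner_fderiv_add_smul_of_norm_eq_one hP hlam hu hu_unit,
    inner_mirrorReflect_of_inner_eq_zero horth]

end

theorem IsNormal.mirrorReflect {U : Set (ℝ × ℝ)} {P ν u : ℝ × ℝ → E} (h : IsNormal U P u)
    (hU : IsOpen U) (hP : DifferentiableOn ℝ P U) (hν : DifferentiableOn ℝ ν U)
    (hu : DifferentiableOn ℝ u U) (hν_unit : ∀ k ∈ U, ‖ν k‖ = 1)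
    (hu_unit : ∀ k ∈ U, ‖u k‖ = 1)
    (horth : ∀ k ∈ U, ⟪ν k, D1 P k⟫ = 0 ∧ ⟪ν k, D2 P k⟫ = 0) :
    IsNormal U P (fun k => mirrorReflect (ν k) (u k)) := by
  obtain ⟨lam, hlam, hlam_orth⟩ := h
  refine ⟨lam, hlam, fun k hk => ?_⟩
  have hUk : U ∈ 𝓝 k := hU.mem_nhds hk
  have hreflect {v : ℝ × ℝ} := inner_fderiv_add_smul_mirrorReflect (v := v)
    (hP.differentiableAt hUk) ((hlam.differentiableOn (by simp)).differentiableAt hUk) (hν.differentiableAt hUk)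
    (hu.differentiableAt hUk) (eventually_of_mem hUk hν_unit) (eventually_of_mem hUk hu_unit)
  exact ⟨(hreflect (horth k hk).1).trans (hlam_orth k hk).1,
    (hreflect (horth k hk).2).trans (hlam_orth k hk).2⟩

theorem IsNormal.add_smul {U : Set (ℝ × ℝ)} {P u : ℝ × ℝ → E} (h : IsNormal U P u)
    {s : ℝ × ℝ → ℝ} (hs : ContDiffOn ℝ (⊤ : ℕ∞) s U) :
    IsNormal U (fun k => P k + s k • u k) u := by
  obtain ⟨lam, hlam, hlam_orth⟩ := h
  have hsurface : (fun k => (P k + s k • u k) + (lam k - s k) • u k) = fun k => P k + lam k • u k :=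
    funext fun k => by module
  exact ⟨fun k => lam k - s k, hlam.sub hs, fun k hk => by
    simpa only [hsurface] using hlam_orth k hk⟩

theorem malus_two_reflections_general
    (U : Set (ℝ × ℝ)) (hU : IsOpen U)
    (Q₁ nu₁ u₁ : ℝ × ℝ → E)
    (hQ₁ : ContDiffOn ℝ (⊤ : ℕ∞) Q₁ U) (hnu₁ : ContDiffOn ℝ (⊤ : ℕ∞) nu₁ U)
    (hu₁ : ContDiffOn ℝ (⊤ : ℕ∞) u₁ U)
    (hu₁unit : ∀ k ∈ U, ‖u₁ k‖ = 1) (hnu₁unit : ∀ k ∈ U, ‖nu₁ k‖ = 1)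
    (horth₁ : ∀ k ∈ U, ⟪nu₁ k, D1 Q₁ k⟫ = 0 ∧ ⟪nu₁ k, D2 Q₁ k⟫ = 0)
    (u₂ : ℝ × ℝ → E)
    (hu₂ : ∀ k, u₂ k = u₁ k - (2 * ⟪u₁ k, nu₁ k⟫) • nu₁ k)
    (s : ℝ × ℝ → ℝ) (hs : ContDiffOn ℝ (⊤ : ℕ∞) s U)
    (Q₂ : ℝ × ℝ → E) (hQ₂def : ∀ k, Q₂ k = Q₁ k + s k • u₂ k)
    (nu₂ : ℝ × ℝ → E) (hnu₂ : ContDiffOn ℝ (⊤ : ℕ∞) nu₂ U)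
    (hnu₂unit : ∀ k ∈ U, ‖nu₂ k‖ = 1)
    (horth₂ : ∀ k ∈ U, ⟪nu₂ k, D1 Q₂ k⟫ = 0 ∧ ⟪nu₂ k, D2 Q₂ k⟫ = 0)
    (u₃ : ℝ × ℝ → E)
    (hu₃ : ∀ k, u₃ k = u₂ k - (2 * ⟪u₂ k, nu₂ k⟫) • nu₂ k)
    (hnormal : IsNormal U Q₁ u₁) :
    IsNormal U Q₂ u₃ := by
  obtain rfl : u₂ = fun k => mirrorReflect (nu₁ k) (u₁ k) := funext hu₂
  obtain rfl : Q₂ = fun k => Q₁ k + s k • mirrorReflect (nu₁ k) (u₁ k) := funext hQ₂def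
  obtain rfl : u₃ = fun k => mirrorReflect (nu₂ k) (mirrorReflect (nu₁ k) (u₁ k)) := funext hu₃
  have hdiff {G : Type} [NormedAddCommGroup G] [NormedSpace ℝ G] {f : ℝ × ℝ → G}
      (hf : ContDiffOn ℝ (⊤ : ℕ∞) f U) : DifferentiableOn ℝ f U :=
    hf.differentiableOn (by simp)
  have du₂ := (hdiff hnu₁).mirrorReflect (hdiff hu₁)
  have hu₂unit : ∀ k ∈ U, ‖mirrorReflect (nu₁ k) (u₁ k)‖ = 1 := fun k hk =>
    (norm_mirrorReflect (hnu₁unit k hk) _).trans (hu₁unit k hk)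
  have hnormal₂ := hnormal.mirrorReflect hU (hdiff hQ₁) (hdiff hnu₁) (hdiff hu₁) hnu₁unit hu₁unit
    horth₁
  exact (hnormal₂.add_smul hs).mirrorReflect hU ((hdiff hQ₁).add ((hdiff hs).smul du₂))
    (hdiff hnu₂) du₂ hnu₂unit hu₂unit horth₂

theorem malus_two_reflections
    (U : Set (ℝ × ℝ)) (hU : IsOpen U) (hconv : Convex ℝ U)
    (Q₁ nu₁ u₁ : ℝ × ℝ → E)
    (hQ₁ : ContDiffOn ℝ (⊤ : ℕ∞) Q₁ U) (hnu₁ : ContDiffOn ℝ (⊤ : ℕ∞) nu₁ U)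
    (hu₁ : ContDiffOn ℝ (⊤ : ℕ∞) u₁ U)
    (hu₁unit : ∀ k ∈ U, ‖u₁ k‖ = 1) (hnu₁unit : ∀ k ∈ U, ‖nu₁ k‖ = 1)
    (horth₁ : ∀ k ∈ U, ⟪nu₁ k, D1 Q₁ k⟫ = 0 ∧ ⟪nu₁ k, D2 Q₁ k⟫ = 0)
    (u₂ : ℝ × ℝ → E)
    (hu₂ : ∀ k, u₂ k = u₁ k - (2 * ⟪u₁ k, nu₁ k⟫) • nu₁ k)
    (s : ℝ × ℝ → ℝ) (hs : ContDiffOn ℝ (⊤ : ℕ∞) s U)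
    (Q₂ : ℝ × ℝ → E) (hQ₂def : ∀ k, Q₂ k = Q₁ k + s k • u₂ k)
    (nu₂ : ℝ × ℝ → E) (hnu₂ : ContDiffOn ℝ (⊤ : ℕ∞) nu₂ U)
    (hnu₂unit : ∀ k ∈ U, ‖nu₂ k‖ = 1)
    (horth₂ : ∀ k ∈ U, ⟪nu₂ k, D1 Q₂ k⟫ = 0 ∧ ⟪nu₂ k, D2 Q₂ k⟫ = 0)
    (u₃ : ℝ × ℝ → E)
    (hu₃ : ∀ k, u₃ k = u₂ k - (2 * ⟪u₂ k, nu₂ k⟫) • nu₂ k)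
    (hnormal : IsNormal U Q₁ u₁) :
    IsNormal U Q₂ u₃ :=
  malus_two_reflections_general U hU Q₁ nu₁ u₁ hQ₁ hnu₁ hu₁ hu₁unit hnu₁unit horth₁ u₂ hu₂ s hs Q₂
    hQ₂def nu₂ hnu₂ hnu₂unit horth₂ u₃ hu₃ hnormal
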